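/- In the plane-wave 2×2 symbol matrix A = [[νₓ²k_h², ν_z²k_z²],[ν_n²k_h², ν_z²k_z²]] for the VTI system, both eigenvalues λ of A are nonnegative if and only if ε ≥ δ (equivalently νₓ ≥ ν_n), given νₓ = ν_z√(1+2ε), ν_n = ν_z√(1+2δ), ν_z > 0 and k_h, k_z not both zero. In particular, if ε < δ one eigenvalue is negative for generic wavevectors, making the system ill-posed (exponentially growing modes). -/

import Mathlib

/-!
The symbol `!![a, b; c, b]` has characteristic polynomial `λ² - (a + b) λ + b (a - c)`.
For `b > 0` and `c ≥ 0` its product of roots `b (a - c)` is negative exactly when `a < c`, and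
then one root is negative; otherwise both roots are nonnegative, since the polynomial is positive
on `λ < 0`. With `a = νₓ² k_h²` and `c = ν_n² k_h²`, the condition `c ≤ a` is `δ ≤ ε`.
-/

theorem Matrix.mem_spectrum_fin_two_iff {K : Type*} [Field K] (a b c d μ : K) :
    μ ∈ spectrum K !![a, b; c, d] ↔ (μ - a) * (μ - d) - b * c = 0 := by
  rw [spectrum.mem_iff, Matrix.isUnit_iff_isUnit_det, isUnit_iff_ne_zero, not_not]
  simp [Matrix.det_fin_two, Matrix.algebraMap_matrix_apply]

theorem exists_neg_mem_spectrum_of_lt {a b c : ℝ} (hb : 0 < b) (hac : a < c) :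
    ∃ μ ∈ spectrum ℝ !![a, b; c, b], μ < 0 := by
  set D := (a - b) ^ 2 + 4 * b * c
  have hD : (a + b) ^ 2 < D := by nlinarith
  have hsqrtD : √D ^ 2 = D := Real.sq_sqrt ((sq_nonneg _).trans hD.le)
  refine ⟨(a + b - √D) / 2, ?_, ?_⟩
  · rw [Matrix.mem_spectrum_fin_two_iff]
    linear_combination hsqrtD / 4
  · have : a + b < √D := Real.lt_sqrt_of_sq_lt hD
    linarith

theorem nonneg_of_mem_spectrum_of_le {a b c μ : ℝ} (hb : 0 < b) (hc : 0 ≤ c) (hca : c ≤ a)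
    (hμ : μ ∈ spectrum ℝ !![a, b; c, b]) : 0 ≤ μ := by
  rw [Matrix.mem_spectrum_fin_two_iff] at hμ
  by_contra! hneg
  nlinarith [mul_nonneg hb.le (sub_nonneg.mpr hca), mul_pos (neg_pos.mpr hneg) (by linarith : 0 < a + b)]

theorem spectrum_nonneg_iff_le {a b c : ℝ} (hb : 0 < b) (hc : 0 ≤ c) :
    (∀ μ ∈ spectrum ℝ !![a, b; c, b], 0 ≤ μ) ↔ c ≤ a := by
  refine ⟨fun h => ?_, fun hca μ hμ => nonneg_of_mem_spectrum_of_le hb hc hca hμ⟩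
  by_contra! hac
  obtain ⟨μ, hμ, hneg⟩ := exists_neg_mem_spectrum_of_lt hb hac
  exact (h μ hμ).not_gt hneg

theorem vti_wellposed_iff_general (νz ε δ kh kz : ℝ) (hνz : 0 < νz)
    (hε : -(1/2) < ε) (hkh : kh ≠ 0) (hkz : kz ≠ 0) :
    (∀ lam ∈ spectrum ℝ
        (Matrix.of ![![(νz * Real.sqrt (1 + 2 * ε)) ^ 2 * kh ^ 2, νz ^ 2 * kz ^ 2],
                     ![(νz * Real.sqrt (1 + 2 * δ)) ^ 2 * kh ^ 2, νz ^ 2 * kz ^ 2]]),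
        0 ≤ lam) ↔ δ ≤ ε := by
  rw [spectrum_nonneg_iff_le (by positivity) (by positivity),
    mul_le_mul_iff_of_pos_right (by positivity),
    pow_le_pow_iff_left₀ (by positivity) (by positivity) two_ne_zero,
    mul_le_mul_iff_right₀ hνz, Real.sqrt_le_sqrt_iff (by linarith)]
  rw [add_le_add_iff_left, mul_le_mul_iff_right₀ two_pos]

/-- For the VTI plane-wave symbol matrix `A = [[νₓ²k_h², ν_z²k_z²],[ν_n²k_h², ν_z²k_z²]]`
with `νₓ = ν_z√(1+2ε)`, `ν_n = ν_z√(1+2δ)`, `ν_z > 0`, and nonzero wavevector components,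
all (real) eigenvalues of `A` are nonnegative if and only if `ε ≥ δ`. -/
theorem vti_wellposed_iff (νz ε δ kh kz : ℝ) (hνz : 0 < νz)
    (hε : -(1/2) < ε) (hδ : -(1/2) < δ) (hkh : kh ≠ 0) (hkz : kz ≠ 0) :
    (∀ lam ∈ spectrum ℝ
        (Matrix.of ![![(νz * Real.sqrt (1 + 2 * ε)) ^ 2 * kh ^ 2, νz ^ 2 * kz ^ 2],
                     ![(νz * Real.sqrt (1 + 2 * δ)) ^ 2 * kh ^ 2, νz ^ 2 * kz ^ 2]]),
        0 ≤ lam) ↔ δ ≤ ε :=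
  vti_wellposed_iff_general νz ε δ kh kz hνz hε hkh hkz
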